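/- arXiv:0901.3764 — 6 statements merged into one kernel-verified Lean document; each statement's English description precedes it below -/
import Mathlib

section
/- Let A ∈ ℂ^{n×n} and B ∈ ℂ^{n×m}. The controllability matrix [B, AB, ..., A^{n-1}B] has rank n if and only if for every λ ∈ ℂ, the only vector p ∈ ℂ^n satisfying pᵀA = λpᵀ and pᵀB = 0 is p = 0. -/
/-!
A vector `p` with `pᵀ A^k B = 0` for all `k < n` satisfies this for every `k`, by
Cayley–Hamilton, so the left kernel of the controllability matrix is the space of all such `p`.
That space is invariant under `p ↦ Aᵀ p`; if it is nonzero, it contains an eigenvector of this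
map over `ℂ`, i.e. a left eigenvector of `A` with `pᵀ B = 0`. Conversely such an eigenvector
satisfies `pᵀ A^k B = λ^k pᵀ B = 0`.
-/

open Matrix

/-- The controllability matrix `[B, AB, ..., A^(n-1)B]` of a pair `(A, B)`. -/
noncomputable def ctrbMatrix {n m : ℕ} (A : Matrix (Fin n) (Fin n) ℂ)
    (B : Matrix (Fin n) (Fin m) ℂ) : Matrix (Fin n) (Fin n × Fin m) ℂ :=
  Matrix.of fun i kj => (A ^ (kj.1 : ℕ) * B) i kj.2

theorem Module.End.exists_hasEigenvector_mem_of_mapsTo {K V : Type*} [Field K] [IsAlgClosed K]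
    [AddCommGroup V] [Module K V] [FiniteDimensional K V] (f : Module.End K V)
    {W : Submodule K V} (hW : W ≠ ⊥) (hfW : ∀ v ∈ W, f v ∈ W) :
    ∃ μ, ∃ v ∈ W, f.HasEigenvector μ v := by
  have : Nontrivial W := Submodule.nontrivial_iff_ne_bot.mpr hW
  obtain ⟨μ, hμ⟩ := Module.End.exists_eigenvalue (f.restrict hfW)
  obtain ⟨v, hv⟩ := hμ.exists_hasEigenvector
  exact ⟨μ, v, v.2, by simpa using congrArg Subtype.val hv.apply_eq_smul, by simpa using hv.2⟩

namespace Matrix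

variable {R K ι κ : Type*} [Fintype ι]

theorem rank_eq_card_iff_forall_vecMul_eq_zero [Field K] [Fintype κ] (C : Matrix ι κ K) :
    C.rank = Fintype.card ι ↔ ∀ p : ι → K, p ᵥ* C = 0 → p = 0 := by
  rw [rank_eq_finrank_span_row, ← Set.finrank, eq_comm,
    ← linearIndependent_iff_card_eq_finrank_span, Fintype.linearIndependent_iff]
  simp only [row, ← vecMul_eq_sum, funext_iff, Pi.zero_apply]

variable [DecidableEq ι]

theorem pow_card_eq_neg_sum [CommRing R] [Nontrivial R] (A : Matrix ι ι R) :
    A ^ Fintype.card ι = -∑ i ∈ Finset.range (Fintype.card ι), A.charpoly.coeff i • A ^ i := by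
  have h := A.aeval_self_charpoly
  rw [A.charpoly_monic.as_sum, charpoly_natDegree_eq_dim] at h
  simpa [Polynomial.aeval_X_pow, Algebra.smul_def, eq_neg_iff_add_eq_zero] using h

theorem vecMul_pow_mul_eq_zero_of_forall_lt_card [CommRing R] [Nontrivial R]
    (A : Matrix ι ι R) (B : Matrix ι κ R) {p : ι → R}
    (hp : ∀ k < Fintype.card ι, p ᵥ* (A ^ k * B) = 0) (k : ℕ) : p ᵥ* (A ^ k * B) = 0 := by
  induction k using Nat.strong_induction_on with
  | _ k ih =>
    rcases lt_or_ge k (Fintype.card ι) with hk | hk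
    · exact hp k hk
    obtain ⟨j, rfl⟩ := Nat.exists_eq_add_of_le' hk
    rw [pow_add, pow_card_eq_neg_sum, mul_neg, Matrix.neg_mul, vecMul_neg, Finset.mul_sum,
      Matrix.sum_mul, vecMul_sum, neg_eq_zero]
    refine Finset.sum_eq_zero fun i hi => ?_
    rw [mul_smul_comm, Matrix.smul_mul, vecMul_smul, ← pow_add,
      ih (j + i) (by simpa using Finset.mem_range.mp hi), smul_zero]

theorem vecMul_pow_eq_pow_smul_of_vecMul_eq_smul [CommSemiring R] {A : Matrix ι ι R} {μ : R}
    {p : ι → R} (hp : p ᵥ* A = μ • p) (k : ℕ) : p ᵥ* A ^ k = μ ^ k • p := by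
  induction k with
  | zero => simp
  | succ k ih => rw [pow_succ, ← vecMul_vecMul, ih, smul_vecMul, hp, smul_smul, pow_succ]

def krylovAnnihilator [CommSemiring R] (A : Matrix ι ι R) (B : Matrix ι κ R) :
    Submodule R (ι → R) :=
  ⨅ k : ℕ, LinearMap.ker (vecMulLinear (A ^ k * B))

section krylovAnnihilator

variable [CommSemiring R] {A : Matrix ι ι R} {B : Matrix ι κ R} {p : ι → R}

theorem mem_krylovAnnihilator : p ∈ krylovAnnihilator A B ↔ ∀ k : ℕ, p ᵥ* (A ^ k * B) = 0 := by
  simp [krylovAnnihilator]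

theorem vecMul_mem_krylovAnnihilator (hp : p ∈ krylovAnnihilator A B) :
    p ᵥ* A ∈ krylovAnnihilator A B := by
  rw [mem_krylovAnnihilator] at hp ⊢
  intro k
  rw [vecMul_vecMul, ← Matrix.mul_assoc, ← pow_succ']
  exact hp (k + 1)

end krylovAnnihilator

theorem krylovAnnihilator_eq_bot_iff [Field K] [IsAlgClosed K] (A : Matrix ι ι K)
    (B : Matrix ι κ K) :
    krylovAnnihilator A B = ⊥ ↔
      ∀ (μ : K) (p : ι → K), p ᵥ* A = μ • p → p ᵥ* B = 0 → p = 0 := by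
  constructor
  · intro h μ p hpA hpB
    rw [← Submodule.mem_bot K, ← h, mem_krylovAnnihilator]
    intro k
    rw [← vecMul_vecMul, vecMul_pow_eq_pow_smul_of_vecMul_eq_smul hpA, smul_vecMul, hpB,
      smul_zero]
  · intro h
    by_contra hne
    obtain ⟨μ, v, hv, hv_eig⟩ := Module.End.exists_hasEigenvector_mem_of_mapsTo (vecMulLinear A)
      hne fun p hp => vecMul_mem_krylovAnnihilator hp
    refine hv_eig.2 (h μ v hv_eig.apply_eq_smul ?_)
    simpa using mem_krylovAnnihilator.mp hv 0

end Matrix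

theorem vecMul_ctrbMatrix_eq_zero_iff {n m : ℕ} (A : Matrix (Fin n) (Fin n) ℂ)
    (B : Matrix (Fin n) (Fin m) ℂ) (p : Fin n → ℂ) :
    p ᵥ* ctrbMatrix A B = 0 ↔ p ∈ krylovAnnihilator A B := by
  rw [mem_krylovAnnihilator]
  constructor
  · intro h
    refine vecMul_pow_mul_eq_zero_of_forall_lt_card A B fun k hk => funext fun j => ?_
    exact congrFun h (⟨k, by simpa using hk⟩, j)
  · intro h
    funext ⟨k, j⟩
    exact congrFun (h k) j

theorem controllable_iff_no_left_eigenvector_orthogonal_to_B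
    {n m : ℕ} (A : Matrix (Fin n) (Fin n) ℂ) (B : Matrix (Fin n) (Fin m) ℂ) :
    (ctrbMatrix A B).rank = n ↔
      ∀ (lam : ℂ) (p : Fin n → ℂ), p ᵥ* A = lam • p → p ᵥ* B = 0 → p = 0 := by
  have h := rank_eq_card_iff_forall_vecMul_eq_zero (ctrbMatrix A B)
  rw [Fintype.card_fin] at h
  rw [h, ← krylovAnnihilator_eq_bot_iff, Submodule.eq_bot_iff]
  simp only [vecMul_ctrbMatrix_eq_zero_iff]
end

section
/- Let A ∈ ℂ^{n×n} and C ∈ ℂ^{p×n}. The observability matrix with block rows C, CA, ..., CA^{n-1} has rank n if and only if the (n+p)×n matrix formed by stacking C on top of zI − A has rank n for every complex scalar z. -/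
open Matrix

/-- The observability matrix with block rows `C, CA, ..., CA^(n-1)`. -/
noncomputable def obsvMatrix {n p : ℕ} (A : Matrix (Fin n) (Fin n) ℂ)
    (C : Matrix (Fin p) (Fin n) ℂ) : Matrix (Fin n × Fin p) (Fin n) ℂ :=
  Matrix.of fun ki j => (C * A ^ (ki.1 : ℕ)) ki.2 j

/-!
Both ranks are full exactly when the corresponding kernels vanish. By Cayley–Hamilton the kernel
of the observability matrix is the unobservable subspace `⋂ₖ ker (C Aᵏ)`, the largest
`A`-invariant subspace inside `ker C`, while the kernel of `[C; zI - A]` consists of the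
`z`-eigenvectors of `A` lying in `ker C`. Over `ℂ` a nonzero `A`-invariant subspace contains an
eigenvector, so the unobservable subspace vanishes iff no eigenvector of `A` is killed by `C`.
-/

open Module Polynomial

section Unobservable

variable {K V W : Type*} [Field K] [AddCommGroup V] [Module K V] [AddCommGroup W] [Module K W]
  (f : End K V) (g : V →ₗ[K] W)

def unobservableSubspace : Submodule K V :=
  ⨅ k : ℕ, LinearMap.ker (g ∘ₗ f ^ k)

variable {f g}

theorem mem_unobservableSubspace {x : V} :
    x ∈ unobservableSubspace f g ↔ ∀ k : ℕ, g ((f ^ k) x) = 0 := by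
  simp [unobservableSubspace, Submodule.mem_iInf]

theorem unobservableSubspace_le_ker : unobservableSubspace f g ≤ LinearMap.ker g := fun x hx ↦ by
  simpa using mem_unobservableSubspace.1 hx 0

theorem apply_mem_unobservableSubspace {x : V} (hx : x ∈ unobservableSubspace f g) :
    f x ∈ unobservableSubspace f g :=
  mem_unobservableSubspace.2 fun k ↦ by
    simpa [pow_succ, Module.End.mul_apply] using mem_unobservableSubspace.1 hx (k + 1)

theorem le_unobservableSubspace {U : Submodule K V} (hfU : ∀ x ∈ U, f x ∈ U)
    (hU : U ≤ LinearMap.ker g) : U ≤ unobservableSubspace f g := fun x hx ↦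
  mem_unobservableSubspace.2 fun k ↦ hU (Module.End.pow_apply_mem_of_forall_mem k hfU x hx)

/-- By Cayley–Hamilton every power of `f` is a combination of `f ^ k` with `k < finrank K V`. -/
theorem mem_unobservableSubspace_iff_forall_lt_finrank [FiniteDimensional K V] {x : V} :
    x ∈ unobservableSubspace f g ↔ ∀ k < finrank K V, g ((f ^ k) x) = 0 := by
  refine ⟨fun hx k _ ↦ mem_unobservableSubspace.1 hx k, fun hx ↦ mem_unobservableSubspace.2 ?_⟩
  intro k
  rcases (finrank K V).eq_zero_or_pos with hV | hV
  · simp [finrank_zero_iff_forall_zero.1 hV x]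
  have hχ : f.charpoly ≠ 1 := fun h ↦ by
    simpa [h] using (f.charpoly_natDegree).trans_ne hV.ne'
  have hdeg := natDegree_modByMonic_lt (X ^ k) f.charpoly_monic hχ
  rw [f.charpoly_natDegree] at hdeg
  rw [f.pow_eq_aeval_mod_charpoly, aeval_eq_sum_range' hdeg, LinearMap.sum_apply, map_sum]
  exact Finset.sum_eq_zero fun i hi ↦ by simp [hx i (Finset.mem_range.1 hi)]

theorem unobservableSubspace_eq_bot_iff [IsAlgClosed K] [FiniteDimensional K V] :
    unobservableSubspace f g = ⊥ ↔ ∀ μ : K, LinearMap.ker g ⊓ f.eigenspace μ = ⊥ := by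
  refine ⟨fun h μ ↦ eq_bot_iff.2 (h ▸ le_unobservableSubspace ?_ inf_le_left), fun h ↦ ?_⟩
  · exact fun x hx ↦ (Module.End.mem_eigenspace_iff.1 hx.2).symm ▸ Submodule.smul_mem _ μ hx
  by_contra hU
  have := Submodule.nontrivial_iff_ne_bot.2 hU
  obtain ⟨μ, hμ⟩ :=
    Module.End.exists_eigenvalue (f.restrict fun _ ↦ apply_mem_unobservableSubspace (g := g))
  refine hμ (Module.End.eigenspace_restrict_eq_bot _ ?_)
  rw [disjoint_iff_inf_le, inf_comm, ← h μ]
  exact inf_le_inf_right _ unobservableSubspace_le_ker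

end Unobservable

theorem Matrix.rank_eq_card_iff_ker_eq_bot {K m n : Type*} [Field K] [Fintype n]
    (M : Matrix m n K) : M.rank = Fintype.card n ↔ LinearMap.ker M.mulVecLin = ⊥ := by
  have := LinearMap.finrank_range_add_finrank_ker M.mulVecLin
  rw [finrank_fintype_fun_eq_card] at this
  rw [Matrix.rank, ← Submodule.finrank_eq_zero]
  omega

theorem ker_mulVecLin_fromRows_smul_one_sub {K m n : Type*} [Field K] [Fintype n] [DecidableEq n]
    (C : Matrix m n K) (A : Matrix n n K) (z : K) :
    LinearMap.ker (fromRows C (z • 1 - A)).mulVecLin =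
      LinearMap.ker C.mulVecLin ⊓ Module.End.eigenspace A.mulVecLin z := by
  ext x
  simp only [LinearMap.mem_ker, Submodule.mem_inf, mulVecLin_apply, fromRows_mulVec]
  rw [← Sum.elim_zero_zero, Sum.elim_eq_iff]
  simp [sub_mulVec, smul_mulVec, sub_eq_zero, eq_comm]

theorem ker_mulVecLin_obsvMatrix {n p : ℕ} (A : Matrix (Fin n) (Fin n) ℂ)
    (C : Matrix (Fin p) (Fin n) ℂ) :
    LinearMap.ker (obsvMatrix A C).mulVecLin = unobservableSubspace A.mulVecLin C.mulVecLin := by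
  have obsvMatrix_mulVec (x : Fin n → ℂ) (k : Fin n) (i : Fin p) :
      (obsvMatrix A C *ᵥ x) (k, i) = (C *ᵥ (A.mulVecLin ^ (k : ℕ)) x) i := by
    rw [← toLin'_apply', ← toLin'_pow, toLin'_apply, mulVec_mulVec]
    rfl
  ext x
  rw [mem_unobservableSubspace_iff_forall_lt_finrank, finrank_fin_fun]
  simp [funext_iff, Prod.forall, Fin.forall_iff, obsvMatrix_mulVec]

theorem observable_iff_hautus_rank
    {n p : ℕ} (A : Matrix (Fin n) (Fin n) ℂ) (C : Matrix (Fin p) (Fin n) ℂ) :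
    (obsvMatrix A C).rank = n ↔
      ∀ z : ℂ, (Matrix.fromRows C (z • (1 : Matrix (Fin n) (Fin n) ℂ) - A)).rank = n := by
  have rank_eq_n {m : Type} (M : Matrix m (Fin n) ℂ) :
      M.rank = n ↔ LinearMap.ker M.mulVecLin = ⊥ := by
    rw [← M.rank_eq_card_iff_ker_eq_bot, Fintype.card_fin]
  simp only [rank_eq_n, ker_mulVecLin_obsvMatrix, ker_mulVecLin_fromRows_smul_one_sub]
  exact unobservableSubspace_eq_bot_iff
end

section
/- Let A ∈ ℂ^{n×n}, B ∈ ℂ^{n×m}, and suppose the controllability matrix [B, AB, ..., A^{n-1}B] has rank q with 0 < q < n. Then there exists an invertible matrix P ∈ ℂ^{n×n} such that P⁻¹AP is block upper triangular of the form [[Â₁₁, Â₁₂],[0, Â₂₂]] with Â₁₁ of size q×q, and P⁻¹B = [[B̂₁₁],[0]] with B̂₁₁ of size q×m, and moreover the q×(qm) matrix [B̂₁₁, Â₁₁B̂₁₁, ..., Â₁₁^{q-1}B̂₁₁] has rank q. -/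
/-!
The columns `A ^ k * B` (`k < n`) of the controllability matrix span the reachable subspace `V`,
which by Cayley–Hamilton contains `A ^ k * B` for every `k`; so `V` is `A`-invariant and contains
the columns of `B`. Taking for `P` a basis whose first `q = dim V` vectors span `V` makes
`P⁻¹ A P` block upper triangular and `P⁻¹ B` zero below row `q`. Then `(P⁻¹ A P) ^ k * P⁻¹ B =
P⁻¹ A ^ k B` is zero below row `q` and its top block is `Â₁₁ ^ k * B̂₁₁`, so the top rows of
`P⁻¹ [B, AB, …]`, which have rank `q`, lie in the reachable subspace of `(Â₁₁, B̂₁₁)`.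
-/

open Matrix

open Module Submodule

namespace Matrix

variable {R K : Type*} [CommRing R] [Field K] {ι κ α β γ : Type*} [Fintype ι]

theorem pow_mem_span_pow_lt_card [DecidableEq ι] (M : Matrix ι ι R) (k : ℕ) :
    M ^ k ∈ span R ((M ^ ·) '' Set.Iio (Fintype.card ι)) := by
  nontriviality R
  cases isEmpty_or_nonempty ι
  · simp [Subsingleton.elim (M ^ k) 0]
  have hdeg : (Polynomial.X ^ k %ₘ M.charpoly).natDegree < Fintype.card ι := by
    rw [← M.charpoly_natDegree_eq_dim]
    refine Polynomial.natDegree_modByMonic_lt _ M.charpoly_monic fun h =>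
      Fintype.card_ne_zero (α := ι) ?_
    simpa [h] using M.charpoly_natDegree_eq_dim.symm
  rw [pow_eq_aeval_mod_charpoly, Polynomial.aeval_eq_sum_range' hdeg]
  exact sum_mem fun i hi => smul_mem _ _ (subset_span ⟨i, Finset.mem_range.mp hi, rfl⟩)

theorem submatrix_mul_of_row_eq_zero [Fintype κ] [NonUnitalNonAssocSemiring α] (A : Matrix β ι α)
    {M : Matrix ι γ α} (f : κ → β) {e : κ → ι} (he : Function.Injective e)
    (hM : ∀ i ∉ Set.range e, M i = 0) :
    (A * M).submatrix f id = A.submatrix f e * M.submatrix e id := by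
  ext i j
  exact (Fintype.sum_of_injective e he _ _ (fun l hl => by simp [hM l hl]) fun _ => rfl).symm

theorem submatrix_pow_mul_of_row_eq_zero [Fintype κ] [DecidableEq ι] [DecidableEq κ] [Semiring α]
    {A : Matrix ι ι α} {M : Matrix ι γ α} {e : κ → ι} (he : Function.Injective e)
    (hM : ∀ k : ℕ, ∀ i ∉ Set.range e, (A ^ k * M) i = 0) (k : ℕ) :
    (A ^ k * M).submatrix e id = A.submatrix e e ^ k * M.submatrix e id := by
  induction k with
  | zero => simp
  | succ k ih =>
    rw [pow_succ', Matrix.mul_assoc, submatrix_mul_of_row_eq_zero A e he (hM k), ih, pow_succ',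
      Matrix.mul_assoc]

theorem rank_submatrix_of_row_eq_zero [Finite κ] [Fintype γ] {M : Matrix ι γ K} {e : κ → ι}
    (hM : ∀ i ∉ Set.range e, M i = 0) : (M.submatrix e id).rank = M.rank := by
  suffices span K (Set.range (M.submatrix e id).row) = span K (Set.range M.row) by
    rw [rank_eq_finrank_span_row, rank_eq_finrank_span_row, this]
  refine le_antisymm (span_mono (Set.range_comp_subset_range e M.row)) (span_le.mpr ?_)
  rintro _ ⟨i, rfl⟩
  by_cases hi : i ∈ Set.range e
  · obtain ⟨l, rfl⟩ := hi
    exact subset_span ⟨l, rfl⟩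
  · rw [row_apply', hM i hi]
    exact zero_mem _

theorem rank_le_finrank_of_forall_col_mem [Fintype γ] {M : Matrix ι γ K} {S : Submodule K (ι → K)}
    (hM : ∀ j, M.col j ∈ S) : M.rank ≤ finrank K S := by
  rw [rank, range_mulVecLin]
  exact finrank_mono (span_le.mpr (Set.range_subset_iff.mpr hM))

theorem conj_pow_mul_inv_mul [DecidableEq ι] {P : Matrix ι ι R} (hP : IsUnit P) (A : Matrix ι ι R)
    (B : Matrix ι γ R) (k : ℕ) : (P⁻¹ * A * P) ^ k * (P⁻¹ * B) = P⁻¹ * (A ^ k * B) := by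
  obtain ⟨u, rfl⟩ := hP
  rw [← coe_units_inv, Units.conj_pow', Matrix.mul_assoc, Matrix.mul_assoc,
    ← Matrix.mul_assoc (u : Matrix ι ι R) _ B, Units.mul_inv, Matrix.one_mul]

end Matrix

section ChangeOfBasis

variable {K E : Type*} [Field K] [AddCommGroup E] [Module K E] {n : ℕ}

theorem Submodule.exists_basis_fin_mem_of_lt [FiniteDimensional K E] (V : Submodule K E)
    (hn : finrank K E = n) : ∃ b : Basis (Fin n) K E, ∀ i : Fin n, ↑i < finrank K V → b i ∈ V := by
  obtain ⟨W, hVW⟩ := V.exists_isCompl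
  have hsum := finrank_add_eq_of_isCompl hVW
  have hW : finrank K W = n - finrank K V := by omega
  let σ : Fin (finrank K V) ⊕ Fin (n - finrank K V) ≃ Fin n :=
    finSumFinEquiv.trans (finCongr (by omega))
  refine ⟨(((finBasis K V).prod (finBasisOfFinrankEq K W hW)).map
    (V.prodEquivOfIsCompl W hVW)).reindex σ, fun i hi => ?_⟩
  have hi' : i = σ (Sum.inl ⟨i, hi⟩) := by ext; simp [σ]
  rw [hi', Basis.reindex_apply, Equiv.symm_apply_apply, Basis.map_apply,
    coe_prodEquivOfIsCompl']
  simp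

theorem Module.Basis.repr_eq_zero_of_forall_mem {b : Basis (Fin n) K E} {V : Submodule K E}
    (hb : ∀ i : Fin n, ↑i < finrank K V → b i ∈ V) {v : E} (hv : v ∈ V) {i : Fin n}
    (hi : finrank K V ≤ ↑i) : b.repr v i = 0 := by
  have : FiniteDimensional K E := Module.Finite.of_basis b
  have hq : finrank K V ≤ n := hi.trans i.isLt.le
  have hspan : span K (b '' Set.range (Fin.castLE hq)) = V := by
    refine eq_of_le_of_finrank_eq (span_le.mpr ?_) ?_
    · rintro _ ⟨_, ⟨l, rfl⟩, rfl⟩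
      exact hb _ l.isLt
    · rw [← Set.range_comp,
        finrank_span_eq_card (b.linearIndependent.comp _ (Fin.castLE_injective hq)), Fintype.card_fin]
  by_contra hne
  have := b.repr_support_subset_of_mem_span _ (hspan ▸ hv) (Finsupp.mem_support_iff.mpr hne)
  rw [Fin.range_castLE] at this
  exact absurd this (not_lt.mpr hi)

theorem Submodule.exists_isUnit_col_mem_of_lt (V : Submodule K (Fin n → K)) :
    ∃ P : Matrix (Fin n) (Fin n) K, IsUnit P ∧ (∀ j : Fin n, ↑j < finrank K V → P.col j ∈ V) ∧
      ∀ v ∈ V, ∀ i : Fin n, finrank K V ≤ ↑i → (P⁻¹ *ᵥ v) i = 0 := by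
  obtain ⟨b, hb⟩ := V.exists_basis_fin_mem_of_lt (finrank_fin_fun K)
  let e := Pi.basisFun K (Fin n)
  have : Invertible (e.toMatrix b) := e.invertibleToMatrix b
  refine ⟨e.toMatrix b, isUnit_of_invertible _, fun j hj => ?_, fun v hv i hi => ?_⟩
  · convert hb j hj using 1
    ext l
    simp [e, Basis.toMatrix_apply]
  · have he : ⇑(e.repr v) = v := funext (Pi.basisFun_repr K (Fin n) v)
    rw [inv_eq_left_inv (b.toMatrix_mul_toMatrix_flip e), ← he, e.toMatrix_mulVec_repr b v]
    exact b.repr_eq_zero_of_forall_mem hb hv hi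

end ChangeOfBasis

section Reachable

variable {R : Type*} [CommRing R] {ι γ : Type*} [Fintype ι] [DecidableEq ι]

def reachableSubspace (A : Matrix ι ι R) (B : Matrix ι γ R) : Submodule R (ι → R) :=
  span R (Set.range fun p : ℕ × γ => (A ^ p.1 * B).col p.2)

theorem pow_mul_col_mem_reachableSubspace (A : Matrix ι ι R) (B : Matrix ι γ R) (k : ℕ) (j : γ) :
    (A ^ k * B).col j ∈ reachableSubspace A B :=
  subset_span ⟨(k, j), rfl⟩

theorem col_mem_reachableSubspace (A : Matrix ι ι R) (B : Matrix ι γ R) (j : γ) :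
    B.col j ∈ reachableSubspace A B := by
  simpa using pow_mul_col_mem_reachableSubspace A B 0 j

theorem mulVec_mem_reachableSubspace {A : Matrix ι ι R} {B : Matrix ι γ R} {v : ι → R}
    (hv : v ∈ reachableSubspace A B) : A *ᵥ v ∈ reachableSubspace A B := by
  suffices reachableSubspace A B ≤ (reachableSubspace A B).comap A.mulVecLin from this hv
  refine span_le.mpr ?_
  rintro _ ⟨⟨k, j⟩, rfl⟩
  change (A * (A ^ k * B)).col j ∈ reachableSubspace A B
  rw [← Matrix.mul_assoc, ← pow_succ']
  exact pow_mul_col_mem_reachableSubspace A B (k + 1) j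

theorem range_ctrbMatrix {n m : ℕ} (A : Matrix (Fin n) (Fin n) ℂ) (B : Matrix (Fin n) (Fin m) ℂ) :
    LinearMap.range (ctrbMatrix A B).mulVecLin = reachableSubspace A B := by
  rw [range_mulVecLin]
  refine le_antisymm (span_le.mpr ?_) (span_le.mpr ?_)
  · rintro _ ⟨⟨k, j⟩, rfl⟩
    exact pow_mul_col_mem_reachableSubspace A B k j
  · rintro _ ⟨⟨k, j⟩, rfl⟩
    let mulCol : Matrix (Fin n) (Fin n) ℂ →ₗ[ℂ] Fin n → ℂ :=
      { toFun N := N *ᵥ B.col j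
        map_add' N N' := add_mulVec N N' _
        map_smul' c N := smul_mulVec c N _ }
    refine span_mono ?_ (apply_mem_span_image_of_mem_span mulCol (A.pow_mem_span_pow_lt_card k))
    rintro _ ⟨_, ⟨i, hi, rfl⟩, rfl⟩
    exact ⟨(⟨i, by simpa using hi⟩, j), rfl⟩

theorem rank_ctrbMatrix {n m : ℕ} (A : Matrix (Fin n) (Fin n) ℂ) (B : Matrix (Fin n) (Fin m) ℂ) :
    (ctrbMatrix A B).rank = finrank ℂ (reachableSubspace A B) := by
  rw [rank, range_ctrbMatrix]

theorem ctrbMatrix_conj {n m : ℕ} {P : Matrix (Fin n) (Fin n) ℂ} (hP : IsUnit P)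
    (A : Matrix (Fin n) (Fin n) ℂ) (B : Matrix (Fin n) (Fin m) ℂ) :
    ctrbMatrix (P⁻¹ * A * P) (P⁻¹ * B) = P⁻¹ * ctrbMatrix A B := by
  ext i ⟨k, j⟩
  rw [ctrbMatrix, of_apply, conj_pow_mul_inv_mul hP]
  rfl

theorem rank_ctrbMatrix_conj {n m : ℕ} {P : Matrix (Fin n) (Fin n) ℂ} (hP : IsUnit P)
    (A : Matrix (Fin n) (Fin n) ℂ) (B : Matrix (Fin n) (Fin m) ℂ) :
    (ctrbMatrix (P⁻¹ * A * P) (P⁻¹ * B)).rank = (ctrbMatrix A B).rank := by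
  rw [ctrbMatrix_conj hP, rank_mul_eq_right_of_isUnit_det _ _
    (isUnit_nonsing_inv_det _ ((isUnit_iff_isUnit_det P).mp hP))]

theorem rank_ctrbMatrix_le_rank_ctrbMatrix_submatrix {n m q : ℕ} {A : Matrix (Fin n) (Fin n) ℂ}
    {B : Matrix (Fin n) (Fin m) ℂ} {e : Fin q → Fin n} (he : Function.Injective e)
    (hAB : ∀ k : ℕ, ∀ i ∉ Set.range e, (A ^ k * B) i = 0) :
    (ctrbMatrix A B).rank ≤ (ctrbMatrix (A.submatrix e e) (B.submatrix e id)).rank := by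
  have hrows : ∀ i ∉ Set.range e, ctrbMatrix A B i = 0 := by
    intro i hi
    ext ⟨k, j⟩
    exact congrFun (hAB k i hi) j
  rw [← rank_submatrix_of_row_eq_zero hrows, rank_ctrbMatrix]
  refine rank_le_finrank_of_forall_col_mem fun ⟨k, j⟩ => ?_
  change ((A ^ (k : ℕ) * B).submatrix e id).col j ∈ _
  rw [submatrix_pow_mul_of_row_eq_zero he hAB]
  exact pow_mul_col_mem_reachableSubspace _ _ _ j

end Reachable

theorem controllable_decomposition_general
    {n m q : ℕ} (A : Matrix (Fin n) (Fin n) ℂ) (B : Matrix (Fin n) (Fin m) ℂ)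
    (hqn : q < n) (hrank : (ctrbMatrix A B).rank = q) :
    ∃ P : Matrix (Fin n) (Fin n) ℂ, IsUnit P ∧
      (∀ i j : Fin n, q ≤ (i : ℕ) → (j : ℕ) < q → (P⁻¹ * A * P) i j = 0) ∧
      (∀ (i : Fin n) (j : Fin m), q ≤ (i : ℕ) → (P⁻¹ * B) i j = 0) ∧
      (ctrbMatrix ((P⁻¹ * A * P).submatrix (Fin.castLE hqn.le) (Fin.castLE hqn.le))
        ((P⁻¹ * B).submatrix (Fin.castLE hqn.le) id)).rank = q := by
  have hV : finrank ℂ (reachableSubspace A B) = q := rank_ctrbMatrix A B ▸ hrank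
  obtain ⟨P, hP, hPcol, hPinv⟩ := (reachableSubspace A B).exists_isUnit_col_mem_of_lt
  rw [hV] at hPcol hPinv
  have hlow : ∀ k : ℕ, ∀ i ∉ Set.range (Fin.castLE hqn.le),
      ((P⁻¹ * A * P) ^ k * (P⁻¹ * B)) i = 0 := by
    intro k i hi
    funext j
    rw [conj_pow_mul_inv_mul hP]
    exact hPinv _ (pow_mul_col_mem_reachableSubspace A B k j) i
      (by simpa [Fin.range_castLE] using hi)
  refine ⟨P, hP, fun i j hi hj => ?_,
    fun i j hi => hPinv _ (col_mem_reachableSubspace A B j) i hi, ?_⟩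
  · rw [Matrix.mul_assoc]
    exact hPinv _ (mulVec_mem_reachableSubspace (hPcol j hj)) i hi
  refine le_antisymm ((rank_le_card_height _).trans_eq (Fintype.card_fin q)) ?_
  calc q = (ctrbMatrix (P⁻¹ * A * P) (P⁻¹ * B)).rank := by rw [rank_ctrbMatrix_conj hP, hrank]
    _ ≤ _ := rank_ctrbMatrix_le_rank_ctrbMatrix_submatrix (Fin.castLE_injective _) hlow

theorem controllable_decomposition
    {n m q : ℕ} (A : Matrix (Fin n) (Fin n) ℂ) (B : Matrix (Fin n) (Fin m) ℂ)
    (hq : 0 < q) (hqn : q < n) (hrank : (ctrbMatrix A B).rank = q) :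
    ∃ P : Matrix (Fin n) (Fin n) ℂ, IsUnit P ∧
      (∀ i j : Fin n, q ≤ (i : ℕ) → (j : ℕ) < q → (P⁻¹ * A * P) i j = 0) ∧
      (∀ (i : Fin n) (j : Fin m), q ≤ (i : ℕ) → (P⁻¹ * B) i j = 0) ∧
      (ctrbMatrix ((P⁻¹ * A * P).submatrix (Fin.castLE hqn.le) (Fin.castLE hqn.le))
        ((P⁻¹ * B).submatrix (Fin.castLE hqn.le) id)).rank = q :=
  controllable_decomposition_general A B hqn hrank
end

section
/- Let A ∈ ℝ^{n×n} and C ∈ ℝ^{p×n}. If there exists a nonzero x ∈ ℝ^n with C A^k x = 0 for k = 0, 1, ..., n−1, then the observability Gramian ∫_{t₀}^{t_f} exp(tA)ᵀ Cᵀ C exp(tA) dt is singular for all t₀ < t_f. -/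
open Matrix intervalIntegral

/-! Cayley–Hamilton writes every power of `A` as a linear combination of `A ^ 0, …, A ^ (n - 1)`,
so the subspace `{M | C *ᵥ (M *ᵥ x) = 0}` of matrices contains all powers of `A`, hence of `t • A`.
Being finite-dimensional it is closed, so it also contains the sum `exp (t • A)` of the exponential
series. Thus the integrand of the Gramian annihilates `x` at every time, and so does the Gramian. -/

open Polynomial in
theorem Matrix.pow_mem_of_forall_lt_card {R n : Type*} [CommRing R] [Nontrivial R] [Fintype n]
    [DecidableEq n] {A : Matrix n n R} {K : Submodule R (Matrix n n R)}
    (h : ∀ k < Fintype.card n, A ^ k ∈ K) (k : ℕ) : A ^ k ∈ K := by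
  classical
  have hlow : degreeLT R (Fintype.card n) ≤ K.comap (aeval A).toLinearMap := by
    rw [degreeLT_eq_span_X_pow, Submodule.span_le, Finset.coe_image, Set.image_subset_iff]
    intro i hi
    simpa using h i (Finset.mem_range.mp hi)
  rw [pow_eq_aeval_mod_charpoly]
  refine hlow (mem_degreeLT.mpr ?_)
  rw [← A.charpoly_degree_eq_dim]
  exact degree_modByMonic_lt _ A.charpoly_monic

theorem NormedSpace.exp_mem_of_forall_pow_mem {𝕂 𝔸 : Type*} [Field 𝕂] [CharZero 𝕂] [Ring 𝔸]
    [Algebra 𝕂 𝔸] [TopologicalSpace 𝔸] [IsTopologicalRing 𝔸] {K : Submodule 𝕂 𝔸}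
    (hK : IsClosed (K : Set 𝔸)) {a : 𝔸} (h : ∀ k, a ^ k ∈ K) : exp a ∈ K := by
  rw [exp_eq_tsum 𝕂]
  exact tsum_mem hK fun k => K.smul_mem _ (h k)

theorem Matrix.mulVec_exp_smul_mulVec_eq_zero {𝕜 m n : Type*} [RCLike 𝕜] [Fintype n]
    [DecidableEq n] {A : Matrix n n 𝕜} {C : Matrix m n 𝕜} {x : n → 𝕜}
    (h : ∀ k < Fintype.card n, C *ᵥ (A ^ k *ᵥ x) = 0) (t : 𝕜) :
    C *ᵥ (NormedSpace.exp (t • A) *ᵥ x) = 0 := by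
  let K : Submodule 𝕜 (Matrix n n 𝕜) :=
    LinearMap.ker (C.mulVecLin ∘ₗ (mulVecBilin 𝕜 𝕜).flip x)
  have hpow : ∀ k, A ^ k ∈ K := pow_mem_of_forall_lt_card (by simpa [K] using h)
  have hexp : NormedSpace.exp (t • A) ∈ K :=
    NormedSpace.exp_mem_of_forall_pow_mem K.closed_of_finiteDimensional fun k => by
      simpa only [smul_pow] using K.smul_mem _ (hpow k)
  simpa [K] using hexp

theorem Matrix.continuous_exp {𝕜 m : Type*} [RCLike 𝕜] [Fintype m] [DecidableEq m] :
    Continuous (NormedSpace.exp : Matrix m m 𝕜 → Matrix m m 𝕜) := by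
  -- any matrix norm induces the product topology; the `ℓ∞` operator norm is a convenient choice
  let : NormedRing (Matrix m m 𝕜) := Matrix.linftyOpNormedRing
  let : NormedAlgebra 𝕜 (Matrix m m 𝕜) := Matrix.linftyOpNormedAlgebra
  let : NormedAlgebra ℚ (Matrix m m 𝕜) := .restrictScalars ℚ 𝕜 _
  exact @NormedSpace.exp_continuous _ _ _ (FiniteDimensional.complete 𝕜 _)

theorem Matrix.of_intervalIntegral_mulVec {𝕜 m n : Type*} [RCLike 𝕜] [Fintype n]
    {g : ℝ → Matrix m n 𝕜} {a b : ℝ}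
    (hg : ∀ i j, IntervalIntegrable (fun t => g t i j) MeasureTheory.volume a b) (v : n → 𝕜) :
    (of fun i j => ∫ t in a..b, g t i j) *ᵥ v = fun i => ∫ t in a..b, (g t *ᵥ v) i := by
  ext i
  simp only [mulVec, dotProduct, of_apply, ← integral_mul_const]
  exact (integral_finsetSum fun j _ => (hg i j).mul_const (v j)).symm

theorem gramian_singular_of_unobservable_markov_parameters
    {n p : ℕ} (A : Matrix (Fin n) (Fin n) ℝ) (C : Matrix (Fin p) (Fin n) ℝ)
    (x : Fin n → ℝ) (hx : x ≠ 0) (hCA : ∀ k < n, C *ᵥ (A ^ k *ᵥ x) = 0) :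
    ∀ t₀ t_f : ℝ, t₀ < t_f →
      ¬ IsUnit (Matrix.of fun i j => ∫ t in t₀..t_f,
        ((NormedSpace.exp (t • A))ᵀ * Cᵀ * C * NormedSpace.exp (t • A)) i j :
          Matrix (Fin n) (Fin n) ℝ) := by
  intro t₀ t_f _ hW
  have hexp : Continuous fun t : ℝ => NormedSpace.exp (t • A) :=
    continuous_exp.comp (continuous_id.smul continuous_const)
  have hcont : Continuous fun t : ℝ =>
      (NormedSpace.exp (t • A))ᵀ * Cᵀ * C * NormedSpace.exp (t • A) := by
    fun_prop
  have hkernel : ∀ t : ℝ, C *ᵥ (NormedSpace.exp (t • A) *ᵥ x) = 0 :=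
    mulVec_exp_smul_mulVec_eq_zero (by simpa using hCA)
  refine hx (mulVec_injective_iff_isUnit.mpr hW ?_)
  rw [of_intervalIntegral_mulVec fun i j => (hcont.matrix_elem i j).intervalIntegrable _ _,
    mulVec_zero]
  ext i
  simp [← mulVec_mulVec, hkernel]
end

section
/- Let A ∈ ℝ^{n×n}, B ∈ ℝ^{n×m}, t₀ < t_f. If the controllability Gramian G_C = ∫_{t₀}^{t_f} exp((t₀−s)A) B Bᵀ exp((t₀−s)A)ᵀ ds is invertible, then for any x₀, x_f ∈ ℝ^n there exists a continuous input u : [t₀, t_f] → ℝ^m such that the solution of x' = Ax + Bu, x(t₀) = x₀ satisfies x(t_f) = x_f. -/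
/-!
With `Φ t = exp (t • A)`, steer by `u s = Bᵀ Φ(t₀ - s)ᵀ c` where `c = G⁻¹ (Φ(t₀ - t_f) x_f - x₀)`.
Since `Φ(t_f - s) = Φ(t_f - t₀) Φ(t₀ - s)`, the forced response is `Φ(t_f - t₀) G c`, which is
`x_f - Φ(t_f - t₀) x₀` because `Φ(t_f - t₀) Φ(t₀ - t_f) = 1`.
-/

open Matrix intervalIntegral

namespace Matrix

section Exponential

variable {ι : Type*} [Fintype ι] [DecidableEq ι]

theorem continuous_exp_smul (A : Matrix ι ι ℝ) :
    Continuous fun t : ℝ => NormedSpace.exp (t • A) := by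
  let _ : NormedRing (Matrix ι ι ℝ) := Matrix.linftyOpNormedRing
  let _ : NormedAlgebra ℝ (Matrix ι ι ℝ) := Matrix.linftyOpNormedAlgebra
  let _ : NormedAlgebra ℚ (Matrix ι ι ℝ) := Matrix.linftyOpNormedAlgebra
  exact NormedSpace.exp_continuous.comp
    (continuous_id.smul continuous_const : Continuous fun t : ℝ => t • A)

theorem exp_add_smul (A : Matrix ι ι ℝ) (s t : ℝ) :
    NormedSpace.exp ((s + t) • A) = NormedSpace.exp (s • A) * NormedSpace.exp (t • A) := by
  rw [add_smul]
  exact exp_add_of_commute _ _ (((Commute.refl A).smul_left _).smul_right _)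

theorem exp_smul_mul_exp_neg_smul (A : Matrix ι ι ℝ) (t : ℝ) :
    NormedSpace.exp (t • A) * NormedSpace.exp (-t • A) = 1 := by
  rw [← exp_add_smul, add_neg_cancel, zero_smul, NormedSpace.exp_zero]

end Exponential

theorem intervalIntegral_mul_mulVec {ι κ μ : Type*} [Fintype ι] [Fintype κ]
    (P : Matrix μ ι ℝ) {M : ℝ → Matrix ι κ ℝ} (hM : Continuous M) (c : κ → ℝ) (a b : ℝ) :
    (fun k => ∫ s in a..b, ((P * M s) *ᵥ c) k) =
      P *ᵥ (of (fun i j => ∫ s in a..b, M s i j) *ᵥ c) := by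
  have hMij (i j) : Continuous fun s => M s i j := hM.matrix_elem i j
  funext k
  simp only [mulVec, dotProduct, mul_apply, of_apply, Finset.sum_mul, Finset.mul_sum]
  rw [integral_finsetSum fun j _ => (by fun_prop : Continuous _).intervalIntegrable _ _,
    Finset.sum_comm]
  refine Finset.sum_congr rfl fun j _ => ?_
  rw [integral_finsetSum fun i _ => (by fun_prop : Continuous _).intervalIntegrable _ _]
  refine Finset.sum_congr rfl fun i _ => ?_
  rw [← integral_mul_const, ← integral_const_mul]
  simp only [mul_assoc]

end Matrix

theorem gramian_invertible_implies_controllable_general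
    {n m : ℕ} (A : Matrix (Fin n) (Fin n) ℝ) (B : Matrix (Fin n) (Fin m) ℝ)
    (t₀ t_f : ℝ)
    (G : Matrix (Fin n) (Fin n) ℝ)
    (hG : G = Matrix.of fun i j => ∫ s in t₀..t_f,
      (NormedSpace.exp ((t₀ - s) • A) * B * Bᵀ * (NormedSpace.exp ((t₀ - s) • A))ᵀ) i j)
    (hGinv : IsUnit G) :
    ∀ x₀ x_f : Fin n → ℝ, ∃ u : ℝ → Fin m → ℝ,
      ContinuousOn u (Set.Icc t₀ t_f) ∧
      (NormedSpace.exp ((t_f - t₀) • A) *ᵥ x₀) +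
        (fun i => ∫ s in t₀..t_f,
          (NormedSpace.exp ((t_f - s) • A) *ᵥ (B *ᵥ u s)) i) = x_f := by
  intro x₀ x_f
  have hΦ_cont : Continuous fun s => NormedSpace.exp ((t₀ - s) • A) :=
    (continuous_exp_smul A).comp (continuous_const.sub continuous_id)
  set c := G⁻¹ *ᵥ (NormedSpace.exp ((t₀ - t_f) • A) *ᵥ x_f - x₀)
  have hGc : G *ᵥ c = NormedSpace.exp ((t₀ - t_f) • A) *ᵥ x_f - x₀ := by
    rw [mulVec_mulVec, mul_nonsing_inv _ ((isUnit_iff_isUnit_det G).mp hGinv), one_mulVec]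
  refine ⟨fun s => Bᵀ *ᵥ ((NormedSpace.exp ((t₀ - s) • A))ᵀ *ᵥ c), Continuous.continuousOn ?_, ?_⟩
  · exact continuous_const.matrix_mulVec (hΦ_cont.matrix_transpose.matrix_mulVec continuous_const)
  have h_integrand (s : ℝ) :
      NormedSpace.exp ((t_f - s) • A) *ᵥ (B *ᵥ (Bᵀ *ᵥ ((NormedSpace.exp ((t₀ - s) • A))ᵀ *ᵥ c))) =
        (NormedSpace.exp ((t_f - t₀) • A) * (NormedSpace.exp ((t₀ - s) • A) * B * Bᵀ *
          (NormedSpace.exp ((t₀ - s) • A))ᵀ)) *ᵥ c := by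
    simp only [show t_f - s = (t_f - t₀) + (t₀ - s) by ring, exp_add_smul, mulVec_mulVec,
      Matrix.mul_assoc]
  simp only [h_integrand]
  rw [intervalIntegral_mul_mulVec _ (by fun_prop) c, ← hG, hGc, mulVec_sub, mulVec_mulVec,
    ← neg_sub t_f, exp_smul_mul_exp_neg_smul, one_mulVec, add_sub_cancel]

theorem gramian_invertible_implies_controllable
    {n m : ℕ} (A : Matrix (Fin n) (Fin n) ℝ) (B : Matrix (Fin n) (Fin m) ℝ)
    (t₀ t_f : ℝ) (ht : t₀ < t_f)
    (G : Matrix (Fin n) (Fin n) ℝ)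
    (hG : G = Matrix.of fun i j => ∫ s in t₀..t_f,
      (NormedSpace.exp ((t₀ - s) • A) * B * Bᵀ * (NormedSpace.exp ((t₀ - s) • A))ᵀ) i j)
    (hGinv : IsUnit G) :
    ∀ x₀ x_f : Fin n → ℝ, ∃ u : ℝ → Fin m → ℝ,
      ContinuousOn u (Set.Icc t₀ t_f) ∧
      (NormedSpace.exp ((t_f - t₀) • A) *ᵥ x₀) +
        (fun i => ∫ s in t₀..t_f,
          (NormedSpace.exp ((t_f - s) • A) *ᵥ (B *ᵥ u s)) i) = x_f :=
  gramian_invertible_implies_controllable_general A B t₀ t_f G hG hGinv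
end

section
/- Let A ∈ ℝ^{n×n}, B ∈ ℝ^{n×m}, t₀ < t_f. If for every continuous input u the reachability map u ↦ ∫_{t₀}^{t_f} exp((t_f−s)A) B u(s) ds is surjective onto ℝ^n, then the controllability Gramian ∫_{t₀}^{t_f} exp((t₀−s)A) B Bᵀ exp((t₀−s)A)ᵀ ds is invertible. -/
/-!
If `W x = 0` for the Gramian `W`, then `0 = xᵀ W x = ∫ |Bᵀ exp((t₀ - s)A)ᵀ x|² ds`, so
`xᵀ exp((t₀ - s)A) B` vanishes for almost every `s` between `t₀` and `t_f`. Since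
`exp((t₀ - t_f)A) exp((t_f - s)A) = exp((t₀ - s)A)`, the nonzero vector
`y = exp((t₀ - t_f)A)ᵀ x` is then orthogonal to every reachable state, in particular to
itself once `y` is reached.
-/

open Matrix intervalIntegral MeasureTheory NormedSpace

open scoped Interval

section IntervalIntegral

variable {ι κ : Type*} [Fintype κ] {μ : Measure ℝ} {a b : ℝ}

theorem Matrix.dotProduct_intervalIntegral [Fintype ι] {g : ℝ → ι → ℝ} (y : ι → ℝ)
    (hg : ∀ i, IntervalIntegrable (fun s => g s i) μ a b) :
    y ⬝ᵥ (fun i => ∫ s in a..b, g s i ∂μ) = ∫ s in a..b, y ⬝ᵥ g s ∂μ := by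
  simp only [dotProduct, ← intervalIntegral.integral_const_mul]
  exact (integral_finsetSum fun i _ => (hg i).const_mul (y i)).symm

theorem Matrix.mulVec_intervalIntegral {M : ℝ → Matrix ι κ ℝ} (x : κ → ℝ)
    (hM : ∀ i j, IntervalIntegrable (fun s => M s i j) μ a b) :
    (of fun i j => ∫ s in a..b, M s i j ∂μ) *ᵥ x = fun i => ∫ s in a..b, (M s *ᵥ x) i ∂μ := by
  ext i
  simp only [mulVec, dotProduct_comm _ x]
  exact dotProduct_intervalIntegral x (hM i)

theorem Matrix.dotProduct_mulVec_intervalIntegral [Fintype ι] {M : ℝ → Matrix ι ι ℝ} (x : ι → ℝ)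
    (hM : ∀ i j, IntervalIntegrable (fun s => M s i j) μ a b) :
    x ⬝ᵥ ((of fun i j => ∫ s in a..b, M s i j ∂μ) *ᵥ x) = ∫ s in a..b, x ⬝ᵥ (M s *ᵥ x) ∂μ := by
  rw [mulVec_intervalIntegral x hM, dotProduct_intervalIntegral x]
  intro i
  simp only [mulVec, dotProduct]
  simpa only [Finset.sum_fn] using IntervalIntegrable.sum _ fun j _ => (hM i j).mul_const (x j)

end IntervalIntegral

theorem ae_eq_zero_of_intervalIntegral_dotProduct_self_eq_zero {ι : Type*} [Fintype ι]
    {μ : Measure ℝ} {a b : ℝ} {v : ℝ → ι → ℝ}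
    (hv : IntervalIntegrable (fun s => v s ⬝ᵥ v s) μ a b)
    (h : ∫ s in a..b, v s ⬝ᵥ v s ∂μ = 0) : ∀ᵐ s ∂μ, s ∈ Ι a b → v s = 0 := by
  have hnonneg : 0 ≤ᵐ[μ.restrict (Ι a b)] fun s => v s ⬝ᵥ v s :=
    ae_of_all _ fun s => Fintype.sum_nonneg fun i => mul_self_nonneg (v s i)
  rw [Set.uIoc_eq_union] at hnonneg
  have hzero := (integral_eq_zero_iff_of_nonneg_ae hnonneg hv).1 h
  rw [← Set.uIoc_eq_union, Filter.EventuallyEq, ae_restrict_iff' measurableSet_uIoc] at hzero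
  filter_upwards [hzero] with s hs hsab
  exact dotProduct_self_eq_zero.1 (hs hsab)

section Exp

variable {ι : Type*} [Fintype ι] [DecidableEq ι]

theorem Matrix.continuous_exp_smul_s11 (A : Matrix ι ι ℝ) : Continuous fun t : ℝ => exp (t • A) := by
  open scoped Matrix.Norms.Operator in
  exact exp_continuous.comp (continuous_id.smul continuous_const)

theorem Matrix.exp_smul_mul_exp_smul (A : Matrix ι ι ℝ) (a b : ℝ) :
    exp (a • A) * exp (b • A) = exp ((a + b) • A) := by
  rw [add_smul, exp_add_of_commute]
  exact ((Commute.refl A).smul_left a).smul_right b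

end Exp

section Controllability

variable {ι κ : Type*} [Fintype ι] [DecidableEq ι] [Fintype κ]

noncomputable def controllabilityGramian (A : Matrix ι ι ℝ) (B : Matrix ι κ ℝ) (t₀ t_f : ℝ) :
    Matrix ι ι ℝ :=
  of fun i j => ∫ s in t₀..t_f, (exp ((t₀ - s) • A) * B * Bᵀ * (exp ((t₀ - s) • A))ᵀ) i j

noncomputable def reachabilityMap (A : Matrix ι ι ℝ) (B : Matrix ι κ ℝ) (t₀ t_f : ℝ)
    (u : ℝ → κ → ℝ) : ι → ℝ :=
  fun i => ∫ s in t₀..t_f, (exp ((t_f - s) • A) *ᵥ (B *ᵥ u s)) i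

theorem dotProduct_mulVec_controllabilityGramian (A : Matrix ι ι ℝ) (B : Matrix ι κ ℝ)
    (t₀ t_f : ℝ) (x : ι → ℝ) :
    x ⬝ᵥ (controllabilityGramian A B t₀ t_f *ᵥ x) =
      ∫ s in t₀..t_f, (x ᵥ* (exp ((t₀ - s) • A) * B)) ⬝ᵥ (x ᵥ* (exp ((t₀ - s) • A) * B)) := by
  have hcont : Continuous fun s => exp ((t₀ - s) • A) * B * Bᵀ * (exp ((t₀ - s) • A))ᵀ := by
    have hE := (continuous_exp_smul_s11 A).comp (continuous_sub_left t₀)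
    exact ((hE.matrix_mul continuous_const).matrix_mul continuous_const).matrix_mul
      hE.matrix_transpose
  rw [controllabilityGramian, dotProduct_mulVec_intervalIntegral x fun i j =>
    (hcont.matrix_elem i j).intervalIntegrable _ _]
  congr 1 with s
  rw [Matrix.mul_assoc, ← transpose_mul, ← mulVec_mulVec, dotProduct_mulVec, mulVec_transpose]

theorem vecMul_exp_smul_mul_ae_eq_zero {A : Matrix ι ι ℝ} {B : Matrix ι κ ℝ} {t₀ t_f : ℝ}
    {x : ι → ℝ} (hx : controllabilityGramian A B t₀ t_f *ᵥ x = 0) :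
    ∀ᵐ s, s ∈ Ι t₀ t_f → x ᵥ* (exp ((t₀ - s) • A) * B) = 0 := by
  refine ae_eq_zero_of_intervalIntegral_dotProduct_self_eq_zero ?_ ?_
  · have hv : Continuous fun s => x ᵥ* (exp ((t₀ - s) • A) * B) :=
      continuous_const.matrix_vecMul
        (((continuous_exp_smul_s11 A).comp (continuous_sub_left t₀)).matrix_mul continuous_const)
    exact (hv.dotProduct hv).intervalIntegrable _ _
  · rw [← dotProduct_mulVec_controllabilityGramian, hx, dotProduct_zero]

theorem dotProduct_reachabilityMap_eq_zero {A : Matrix ι ι ℝ} {B : Matrix ι κ ℝ} {t₀ t_f : ℝ}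
    {x : ι → ℝ} (hx : controllabilityGramian A B t₀ t_f *ᵥ x = 0) {u : ℝ → κ → ℝ}
    (hu : ContinuousOn u (Set.uIcc t₀ t_f)) :
    (x ᵥ* exp ((t₀ - t_f) • A)) ⬝ᵥ reachabilityMap A B t₀ t_f u = 0 := by
  have hint (i : ι) :
      IntervalIntegrable (fun s => (exp ((t_f - s) • A) *ᵥ (B *ᵥ u s)) i) volume t₀ t_f := by
    have hF : Continuous fun s => exp ((t_f - s) • A) :=
      (continuous_exp_smul_s11 A).comp (continuous_sub_left t_f)
    have hFBu : ContinuousOn (fun s => exp ((t_f - s) • A) *ᵥ (B *ᵥ u s)) (Set.uIcc t₀ t_f) :=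
      (continuous_fst.matrix_mulVec (continuous_const.matrix_mulVec continuous_snd)
        ).comp_continuousOn (hF.continuousOn.prodMk hu)
    exact (continuousOn_pi.1 hFBu i).intervalIntegrable
  unfold reachabilityMap
  rw [dotProduct_intervalIntegral _ hint]
  refine (intervalIntegral.integral_congr_ae ?_).trans intervalIntegral.integral_zero
  filter_upwards [vecMul_exp_smul_mul_ae_eq_zero hx] with s hs hsab
  rw [mulVec_mulVec, dotProduct_mulVec, vecMul_vecMul, ← Matrix.mul_assoc, exp_smul_mul_exp_smul,
    sub_add_sub_cancel, hs hsab, zero_dotProduct]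

end Controllability

theorem gramian_invertible_of_reachability_surjective
    {n m : ℕ} (A : Matrix (Fin n) (Fin n) ℝ) (B : Matrix (Fin n) (Fin m) ℝ)
    (t₀ t_f : ℝ) (ht : t₀ < t_f)
    (hsurj : ∀ x : Fin n → ℝ, ∃ u : ℝ → Fin m → ℝ,
      ContinuousOn u (Set.Icc t₀ t_f) ∧
      (fun i => ∫ s in t₀..t_f, (NormedSpace.exp ((t_f - s) • A) *ᵥ (B *ᵥ u s)) i) = x) :
    IsUnit (Matrix.of fun i j => ∫ s in t₀..t_f,
      (NormedSpace.exp ((t₀ - s) • A) * B * Bᵀ * (NormedSpace.exp ((t₀ - s) • A))ᵀ) i j :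
        Matrix (Fin n) (Fin n) ℝ) := by
  change IsUnit (controllabilityGramian A B t₀ t_f)
  by_contra hW
  rw [isUnit_iff_isUnit_det, isUnit_iff_ne_zero, not_not] at hW
  obtain ⟨x, hx0, hWx⟩ := exists_mulVec_eq_zero_iff.2 hW
  have hy0 : x ᵥ* exp ((t₀ - t_f) • A) ≠ 0 := by
    have hinj := vecMul_injective_iff_isUnit.2 (Matrix.isUnit_exp ((t₀ - t_f) • A))
    exact fun hy => hx0 (hinj (hy.trans (zero_vecMul _).symm))
  obtain ⟨u, hu, hreach⟩ := hsurj (x ᵥ* exp ((t₀ - t_f) • A))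
  refine hy0 (dotProduct_self_eq_zero.1 ?_)
  nth_rewrite 2 [← hreach]
  exact dotProduct_reachabilityMap_eq_zero hWx (by rwa [Set.uIcc_of_le ht.le])
end
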